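/- arXiv:2408.06443 — 3 statements merged into one kernel-verified Lean document; each statement's English description precedes it below -/
import Mathlib

section
/- Let b = (b₁, b₂) ∈ ℝ² with b₁ ≠ 0 and b₂ ≠ 0, and let c¹, c², c³ ∈ ℝ² be such that the three parallel lines l_i = {t·b + c^i : t ∈ ℝ} are pairwise distinct. Then the linear system t₁b₁ + c₁¹ = t₂b₁ + c₁², t₂b₂ + c₂² = t₃b₂ + c₂³, t₃b₁ + c₁³ = t₄b₁ + c₁¹, t₄b₂ + c₂¹ = t₅b₂ + c₂², t₅b₁ + c₁² = t₆b₁ + c₁³, t₆b₂ + c₂³ = t₁b₂ + c₂¹ in unknowns t₁,...,t₆ has a solution, and moreover if (t₁,...,t₆) is a solution then so is (t₁+α,...,t₆+α) for any α ∈ ℝ. -/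
/-- For three pairwise distinct parallel lines l_i = {t·b + cⁱ} with b₁, b₂ ≠ 0,
the six-equation linear system has a solution, and solutions are invariant under
simultaneous translation by α. -/
theorem stmt_6 (b : ℝ × ℝ) (hb1 : b.1 ≠ 0) (hb2 : b.2 ≠ 0)
    (c : Fin 3 → ℝ × ℝ)
    (hdist : ∀ i j : Fin 3, i ≠ j →
      ({x : ℝ × ℝ | ∃ t : ℝ, x = t • b + c i} ≠ {x : ℝ × ℝ | ∃ t : ℝ, x = t • b + c j})) :
    (∃ t₁ t₂ t₃ t₄ t₅ t₆ : ℝ,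
      t₁ * b.1 + (c 0).1 = t₂ * b.1 + (c 1).1 ∧
      t₂ * b.2 + (c 1).2 = t₃ * b.2 + (c 2).2 ∧
      t₃ * b.1 + (c 2).1 = t₄ * b.1 + (c 0).1 ∧
      t₄ * b.2 + (c 0).2 = t₅ * b.2 + (c 1).2 ∧
      t₅ * b.1 + (c 1).1 = t₆ * b.1 + (c 2).1 ∧
      t₆ * b.2 + (c 2).2 = t₁ * b.2 + (c 0).2) ∧
    (∀ t₁ t₂ t₃ t₄ t₅ t₆ α : ℝ,
      (t₁ * b.1 + (c 0).1 = t₂ * b.1 + (c 1).1 ∧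
       t₂ * b.2 + (c 1).2 = t₃ * b.2 + (c 2).2 ∧
       t₃ * b.1 + (c 2).1 = t₄ * b.1 + (c 0).1 ∧
       t₄ * b.2 + (c 0).2 = t₅ * b.2 + (c 1).2 ∧
       t₅ * b.1 + (c 1).1 = t₆ * b.1 + (c 2).1 ∧
       t₆ * b.2 + (c 2).2 = t₁ * b.2 + (c 0).2) →
      ((t₁ + α) * b.1 + (c 0).1 = (t₂ + α) * b.1 + (c 1).1 ∧
       (t₂ + α) * b.2 + (c 1).2 = (t₃ + α) * b.2 + (c 2).2 ∧
       (t₃ + α) * b.1 + (c 2).1 = (t₄ + α) * b.1 + (c 0).1 ∧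
       (t₄ + α) * b.2 + (c 0).2 = (t₅ + α) * b.2 + (c 1).2 ∧
       (t₅ + α) * b.1 + (c 1).1 = (t₆ + α) * b.1 + (c 2).1 ∧
       (t₆ + α) * b.2 + (c 2).2 = (t₁ + α) * b.2 + (c 0).2)) := by
  constructor
  · refine ⟨0,
      ((c 0).1 - (c 1).1) / b.1,
      ((c 0).1 - (c 1).1) / b.1 + ((c 1).2 - (c 2).2) / b.2,
      ((c 0).1 - (c 1).1) / b.1 + ((c 1).2 - (c 2).2) / b.2 + ((c 2).1 - (c 0).1) / b.1,
      ((c 0).1 - (c 1).1) / b.1 + ((c 1).2 - (c 2).2) / b.2 + ((c 2).1 - (c 0).1) / b.1 + ((c 0).2 - (c 1).2) / b.2,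
      ((c 0).1 - (c 1).1) / b.1 + ((c 1).2 - (c 2).2) / b.2 + ((c 2).1 - (c 0).1) / b.1 + ((c 0).2 - (c 1).2) / b.2 + ((c 1).1 - (c 2).1) / b.1,
      ?_, ?_, ?_, ?_, ?_, ?_⟩ <;> field_simp <;> ring
  · rintro t₁ t₂ t₃ t₄ t₅ t₆ α ⟨h1, h2, h3, h4, h5, h6⟩
    refine ⟨?_, ?_, ?_, ?_, ?_, ?_⟩ <;> ring_nf <;> ring_nf at h1 h2 h3 h4 h5 h6 <;> linarith
end

section
/- Suppose X ⊆ ℝⁿ contains a closed path (x¹,...,x^{2m}) with respect to linearly independent directions a¹, a² in ℝⁿ. Then there exists a function F: X → ℝ that cannot be written as F(x) = g₁(a¹·x) + g₂(a²·x) for any functions g₁, g₂: ℝ → ℝ. -/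
open Finset

/-!
A ridge sum `g₁ (p y) + g₂ (q y)` has alternating sum zero along every closed path: consecutive
points share `p` and `q` alternately, so pairing the terms makes the sum telescope. The indicator
of a point visited once per period has alternating sum one, hence is not a ridge sum on the path.
Such a simple closed path sits inside every closed path: if `z i = z (i + d)` is a repetition at
minimal distance `d`, the points strictly between them close up into a shorter closed path, for `d`
odd after dropping `z i`, whose two neighbours then share the same projection.
-/

variable {α β γ : Type*}

structure IsClosedPath (p q : α → β) (m : ℕ) (z : ℕ → α) : Prop where
  pos : 0 < m
  periodic : Function.Periodic z (2 * m)
  ne_succ : ∀ j, z j ≠ z (j + 1)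
  fst : ∀ j, p (z (2 * j)) = p (z (2 * j + 1))
  snd : ∀ j, q (z (2 * j + 1)) = q (z (2 * j + 2))

theorem apply_succ_mod_eq {f : ℕ → α} {N : ℕ} (hN : 0 < N) (hf : f N = f 0) (j : ℕ) :
    f ((j + 1) % N) = f (j % N + 1) := by
  rw [← Nat.mod_add_mod]
  obtain h | h : j % N + 1 < N ∨ j % N + 1 = N := by have := Nat.mod_lt j hN; omega
  · rw [Nat.mod_eq_of_lt h]
  · rw [h, Nat.mod_self, hf]

theorem exists_apply_add_eq_of_not_injOn {z : ℕ → α} {N : ℕ} (h : ¬Set.InjOn z (Set.Iio N)) :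
    ∃ d, 0 < d ∧ d < N ∧ ∃ i, z (i + d) = z i := by
  simp only [Set.InjOn, Set.mem_Iio, not_forall] at h
  obtain ⟨i, hi, j, hj, hij, hne⟩ := h
  rcases Nat.lt_or_gt_of_ne hne with h | h
  · exact ⟨j - i, by omega, by omega, i, by rw [Nat.add_sub_cancel' h.le, hij]⟩
  · exact ⟨i - j, by omega, by omega, j, by rw [Nat.add_sub_cancel' h.le, hij]⟩

namespace IsClosedPath

variable {p q : α → β} {m : ℕ} {z : ℕ → α}

theorem of_loop {k : ℕ} {u : ℕ → α} (hk : 0 < k) (hu : u (2 * k) = u 0)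
    (hne : ∀ j < 2 * k, u j ≠ u (j + 1))
    (hfst : ∀ j < k, p (u (2 * j)) = p (u (2 * j + 1)))
    (hsnd : ∀ j < k, q (u (2 * j + 1)) = q (u (2 * j + 2))) :
    IsClosedPath p q k (fun j => u (j % (2 * k))) where
  pos := hk
  periodic j := by simp only [Nat.add_mod_right]
  ne_succ j := by
    rw [apply_succ_mod_eq (by omega) hu]
    exact hne _ (Nat.mod_lt _ (by omega))
  fst j := by
    rw [apply_succ_mod_eq (by omega) hu, Nat.mul_mod_mul_left]
    exact hfst _ (Nat.mod_lt _ hk)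
  snd j := by
    have hu' : u (2 * k) = u (2 * 0) := hu
    rw [apply_succ_mod_eq (by omega) hu, Nat.mul_mod_mul_left, ← mul_add_one,
      Nat.mul_mod_mul_left, apply_succ_mod_eq (f := fun i => u (2 * i)) hk hu', mul_add_one]
    exact hsnd _ (Nat.mod_lt _ hk)

theorem shift_two_mul (hz : IsClosedPath p q m z) (a : ℕ) :
    IsClosedPath p q m (fun j => z (j + 2 * a)) where
  pos := hz.pos
  periodic j := by simp only [Nat.add_right_comm j (2 * m), hz.periodic _]
  ne_succ j := by simpa only [Nat.add_right_comm j 1] using hz.ne_succ (j + 2 * a)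
  fst j := by simpa only [mul_add, Nat.add_right_comm _ 1] using hz.fst (j + a)
  snd j := by
    simpa only [mul_add, Nat.add_right_comm _ 1, Nat.add_right_comm _ 2] using hz.snd (j + a)

theorem shift_one (hz : IsClosedPath p q m z) : IsClosedPath q p m (fun j => z (j + 1)) where
  pos := hz.pos
  periodic j := by simp only [Nat.add_right_comm j (2 * m), hz.periodic _]
  ne_succ j := hz.ne_succ (j + 1)
  fst j := hz.snd j
  snd j := by simpa only [mul_add_one] using hz.fst (j + 1)

theorem sum_sub_eq_zero [AddCommGroup γ] (hz : IsClosedPath p q m z) {G : α → γ} (g₁ g₂ : β → γ)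
    (hG : ∀ j, G (z j) = g₁ (p (z j)) + g₂ (q (z j))) :
    ∑ a ∈ range m, (G (z (2 * a)) - G (z (2 * a + 1))) = 0 := by
  set f : ℕ → γ := fun a => g₂ (q (z (2 * a)))
  have hterm : ∀ a, G (z (2 * a)) - G (z (2 * a + 1)) = f a - f (a + 1) := by
    intro a
    simp only [f, hG, hz.fst a, mul_add_one, ← hz.snd a]
    abel
  simp only [hterm, sum_range_sub', f, mul_zero]
  rw [← zero_add (2 * m), hz.periodic, sub_self]

theorem sum_ite_sub_eq [AddCommGroup γ] [DecidableEq α] (hz : IsClosedPath p q m z)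
    (hinj : Set.InjOn z (Set.Iio (2 * m))) (c : γ) :
    ∑ a ∈ range m, ((if z (2 * a) = z 0 then c else 0) - (if z (2 * a + 1) = z 0 then c else 0))
      = c := by
  have hne : ∀ j, 0 < j → j < 2 * m → z j ≠ z 0 := fun j hj0 hj h =>
    hj0.ne' (hinj (Set.mem_Iio.2 hj) (Set.mem_Iio.2 (by have := hz.pos; omega)) h)
  obtain ⟨k, rfl⟩ := Nat.exists_eq_add_one_of_ne_zero hz.pos.ne'
  rw [sum_range_succ', sum_eq_zero fun a ha => ?_, mul_zero, if_pos rfl,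
    if_neg (hne 1 one_pos (by omega)), zero_add, sub_zero]
  rw [mem_range] at ha
  rw [if_neg (hne _ (by omega) (by omega)), if_neg (hne _ (by omega) (by omega)), sub_self]

theorem exists_shorter_of_eq_zero (hz : IsClosedPath p q m z) {d : ℕ} (hd0 : 0 < d)
    (hd : d < 2 * m) (hzd : z d = z 0) (hmin : ∀ i e, 0 < e → e < d → z (i + e) ≠ z i) :
    ∃ k < m, ∃ w, IsClosedPath p q k w ∧ Set.range w ⊆ Set.range z := by
  obtain ⟨k, rfl | rfl⟩ := Nat.even_or_odd' d
  · exact ⟨k, by omega, _, of_loop (by omega) hzd (fun j _ => hz.ne_succ j) (fun j _ => hz.fst j)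
      (fun j _ => hz.snd j), Set.range_comp_subset_range _ z⟩
  have hk : 0 < k := Nat.pos_of_ne_zero fun hk => hz.ne_succ 0 (by simpa [hk] using hzd.symm)
  -- `z (2k)`, `z (2k+1) = z 0` and `z 1` share `p`, so `z 0` can be replaced by `z (2k)`.
  set u : ℕ → α := fun j => if j = 0 then z (2 * k) else z j
  have hu : u (2 * k) = u 0 := if_neg (by omega)
  refine ⟨k, by omega, _, of_loop hk hu (fun j _ => ?_) (fun j _ => ?_) (fun j _ => ?_), ?_⟩
  · rcases Nat.eq_zero_or_pos j with rfl | hj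
    · have h := hmin 1 (2 * k - 1) (by omega) (by omega)
      rwa [Nat.add_sub_cancel' (by omega)] at h
    · simpa [u, hj.ne'] using hz.ne_succ j
  · rcases Nat.eq_zero_or_pos j with rfl | hj
    · simpa [u, hz.fst k, hzd] using hz.fst 0
    · simpa [u, hj.ne'] using hz.fst j
  · simpa [u] using hz.snd j
  · refine (Set.range_comp_subset_range _ u).trans (Set.range_subset_iff.2 fun j => ?_)
    simp only [u]
    split_ifs <;> exact Set.mem_range_self _

theorem exists_shorter (hz : IsClosedPath p q m z) (hz_inj : ¬Set.InjOn z (Set.Iio (2 * m))) :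
    ∃ k < m, ∃ w, IsClosedPath p q k w ∧ Set.range w ⊆ Set.range z := by
  classical
  obtain ⟨d, hd0, hdm, hrep_d⟩ := exists_apply_add_eq_of_not_injOn hz_inj
  have hrep : ∃ d, 0 < d ∧ ∃ i, z (i + d) = z i := ⟨d, hd0, hrep_d⟩
  have hd : Nat.find hrep < 2 * m := (Nat.find_min' hrep ⟨hd0, hrep_d⟩).trans_lt hdm
  obtain ⟨hfind_pos, i, hi⟩ := Nat.find_spec hrep
  have hmin (c i e : ℕ) (he : 0 < e) (hed : e < Nat.find hrep) : z (i + e + c) ≠ z (i + c) := by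
    rw [Nat.add_right_comm]
    exact fun h => Nat.find_min hrep hed ⟨he, _, h⟩
  obtain ⟨a, rfl | rfl⟩ := Nat.even_or_odd' i
  · have hrep' : z (Nat.find hrep + 2 * a) = z (0 + 2 * a) := by rwa [zero_add, add_comm]
    obtain ⟨k, hk, w, hw, hwz⟩ :=
      (hz.shift_two_mul a).exists_shorter_of_eq_zero hfind_pos hd hrep' (hmin _)
    exact ⟨k, hk, w, hw, hwz.trans (Set.range_comp_subset_range _ z)⟩
  · have hrep' : z (Nat.find hrep + 1 + 2 * a) = z (0 + 1 + 2 * a) := by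
      rwa [zero_add, add_assoc, add_comm, add_comm 1]
    obtain ⟨k, hk, w, hw, hwz⟩ :=
      (hz.shift_two_mul a).shift_one.exists_shorter_of_eq_zero hfind_pos hd hrep'
        fun i e he hed => by simpa only [add_assoc] using hmin (1 + 2 * a) i e he hed
    exact ⟨k, hk, _, hw.shift_one, (Set.range_comp_subset_range _ w).trans
      (hwz.trans (Set.range_comp_subset_range _ z))⟩

theorem exists_injOn (hz : IsClosedPath p q m z) :
    ∃ k w, IsClosedPath p q k w ∧ Set.InjOn w (Set.Iio (2 * k)) ∧ Set.range w ⊆ Set.range z := by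
  induction m using Nat.strong_induction_on generalizing z with
  | _ m ih =>
  by_cases hz_inj : Set.InjOn z (Set.Iio (2 * m))
  · exact ⟨m, z, hz, hz_inj, subset_rfl⟩
  obtain ⟨k, hk, w, hw, hwz⟩ := hz.exists_shorter hz_inj
  obtain ⟨k', w', hw', hw'_inj, hw'w⟩ := ih k hk hw
  exact ⟨k', w', hw', hw'_inj, hw'w.trans hwz⟩

end IsClosedPath

theorem stmt_12_general (n m : ℕ) (hm : 0 < m) (X : Set (Fin n → ℝ))
    (a1 a2 : Fin n → ℝ)
    (x : ℕ → Fin n → ℝ)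
    (hper : ∀ j, x (j + 2 * m) = x j)
    (hX : ∀ j, x j ∈ X)
    (hne : ∀ j, x j ≠ x (j + 1))
    (h1 : ∀ j, ∑ i, a1 i * x (2 * j) i = ∑ i, a1 i * x (2 * j + 1) i)
    (h2 : ∀ j, ∑ i, a2 i * x (2 * j + 1) i = ∑ i, a2 i * x (2 * j + 2) i) :
    ∃ F : (Fin n → ℝ) → ℝ,
      ¬∃ g1 g2 : ℝ → ℝ, ∀ y ∈ X,
        F y = g1 (∑ i, a1 i * y i) + g2 (∑ i, a2 i * y i) := by
  classical
  have hx : IsClosedPath (fun y => ∑ i, a1 i * y i) (fun y => ∑ i, a2 i * y i) m x :=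
    ⟨hm, hper, hne, h1, h2⟩
  obtain ⟨k, w, hw, hw_inj, hwx⟩ := hx.exists_injOn
  refine ⟨fun y => if y = w 0 then 1 else 0, fun ⟨g1, g2, hg⟩ => ?_⟩
  have hwX : Set.range w ⊆ X := hwx.trans (Set.range_subset_iff.2 hX)
  have h := hw.sum_sub_eq_zero (G := fun y => if y = w 0 then (1 : ℝ) else 0) g1 g2
    fun j => hg (w j) (hwX (Set.mem_range_self j))
  rw [hw.sum_ite_sub_eq hw_inj] at h
  exact one_ne_zero h

/-- If X ⊆ ℝⁿ contains a closed path with respect to linearly independent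
directions a¹, a², then some function on X is not a sum of ridge functions
g₁(a¹·x) + g₂(a²·x). -/
theorem stmt_12 (n m : ℕ) (hm : 0 < m) (X : Set (Fin n → ℝ))
    (a1 a2 : Fin n → ℝ) (hind : LinearIndependent ℝ ![a1, a2])
    (x : ℕ → Fin n → ℝ)
    (hper : ∀ j, x (j + 2 * m) = x j)
    (hX : ∀ j, x j ∈ X)
    (hne : ∀ j, x j ≠ x (j + 1))
    (h1 : ∀ j, ∑ i, a1 i * x (2 * j) i = ∑ i, a1 i * x (2 * j + 1) i)
    (h2 : ∀ j, ∑ i, a2 i * x (2 * j + 1) i = ∑ i, a2 i * x (2 * j + 2) i) :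
    ∃ F : (Fin n → ℝ) → ℝ,
      ¬∃ g1 g2 : ℝ → ℝ, ∀ y ∈ X,
        F y = g1 (∑ i, a1 i * y i) + g2 (∑ i, a2 i * y i) :=
  stmt_12_general n m hm X a1 a2 x hper hX hne h1 h2
end

section
/- Let b = (b₁,b₂) ∈ ℝ² with b₁ ≠ 0, b₂ ≠ 0, and let c¹, c², c³ ∈ ℝ² define three pairwise distinct parallel lines l_i = {t·b + c^i : t ∈ ℝ}. Then l₁ ∪ l₂ ∪ l₃ contains a six-point closed path with respect to the coordinate directions: there exist t₁,...,t₆ ∈ ℝ such that the points x^k = t_k·b + c^{σ(k)} (with σ = (1,2,3,1,2,3)) are pairwise consecutive-distinct, x¹ and x² share the first coordinate, x² and x³ share the second, x³ and x⁴ share the first, x⁴ and x⁵ share the second, x⁵ and x⁶ share the first, and x⁶ and x¹ share the second coordinate. -/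
/-- Three pairwise distinct parallel lines l_i = {t·b + cⁱ} with b₁, b₂ ≠ 0
contain a six-point closed path with respect to the coordinate directions,
with vertices alternating over the lines in the order 1,2,3,1,2,3. -/
theorem stmt_19 (b : ℝ × ℝ) (hb1 : b.1 ≠ 0) (hb2 : b.2 ≠ 0)
    (c : Fin 3 → ℝ × ℝ)
    (hdist : ∀ i j : Fin 3, i ≠ j → ¬∃ t : ℝ, c i - c j = t • b) :
    ∃ t₁ t₂ t₃ t₄ t₅ t₆ : ℝ,
      let x1 := t₁ • b + c 0
      let x2 := t₂ • b + c 1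
      let x3 := t₃ • b + c 2
      let x4 := t₄ • b + c 0
      let x5 := t₅ • b + c 1
      let x6 := t₆ • b + c 2
      (x1 ≠ x2 ∧ x2 ≠ x3 ∧ x3 ≠ x4 ∧ x4 ≠ x5 ∧ x5 ≠ x6 ∧ x6 ≠ x1) ∧
      (x1.1 = x2.1 ∧ x2.2 = x3.2 ∧ x3.1 = x4.1 ∧ x4.2 = x5.2 ∧
       x5.1 = x6.1 ∧ x6.2 = x1.2) := by
  set t₁ : ℝ := 0 with ht₁
  set t₂ : ℝ := ((c 0).1 - (c 1).1) / b.1 with ht₂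
  set t₃ : ℝ := t₂ + ((c 1).2 - (c 2).2) / b.2 with ht₃
  set t₄ : ℝ := t₃ + ((c 2).1 - (c 0).1) / b.1 with ht₄
  set t₅ : ℝ := t₄ + ((c 0).2 - (c 1).2) / b.2 with ht₅
  set t₆ : ℝ := t₅ + ((c 1).1 - (c 2).1) / b.1 with ht₆
  refine ⟨t₁, t₂, t₃, t₄, t₅, t₆, ⟨?_, ?_, ?_, ?_, ?_, ?_⟩, ?_, ?_, ?_, ?_, ?_, ?_⟩
  · intro h
    exact hdist 0 1 (by decide) ⟨t₂ - t₁, by linear_combination (norm := module) h⟩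
  · intro h
    exact hdist 1 2 (by decide) ⟨t₃ - t₂, by linear_combination (norm := module) h⟩
  · intro h
    exact hdist 2 0 (by decide) ⟨t₄ - t₃, by linear_combination (norm := module) h⟩
  · intro h
    exact hdist 0 1 (by decide) ⟨t₅ - t₄, by linear_combination (norm := module) h⟩
  · intro h
    exact hdist 1 2 (by decide) ⟨t₆ - t₅, by linear_combination (norm := module) h⟩
  · intro h
    exact hdist 2 0 (by decide) ⟨t₁ - t₆, by linear_combination (norm := module) h⟩
  all_goals
    simp only [Prod.fst_add, Prod.snd_add, Prod.smul_fst, Prod.smul_snd, smul_eq_mul,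
      ht₁, ht₂, ht₃, ht₄, ht₅, ht₆]
    field_simp [show b.1 ≠ 0 from hb1, show b.2 ≠ 0 from hb2]
    try ring
end
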